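/- arXiv:2512.02761 — 3 statements merged into one kernel-verified Lean document; each statement's English description precedes it below -/
import Mathlib

section
/- Let $f_j:\mathbb{R}^{i_j}\to[0,1]$ be integrable log-concave functions for $j=1,\dots,m$. Then $\int_{\mathbb{R}^{i_1+\cdots+i_m}} \min\{f_1(x_1),\dots,f_m(x_m)\}\, d(x_1,\dots,x_m) \geq \prod_{j=1}^m \int_{\mathbb{R}^{i_j}} f_j(x_j)\,dx_j$. -/
/-!
Since every `f_j` takes values in `[0, 1]`, the product `∏ j, f_j (x_j)` is at most the minimum,
and by Fubini its integral is `∏ j, ∫ f_j`. All the work is in making the integral of the minimum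
meaningful: the minimum is dominated by the geometric mean `∏ j, f_j (x_j) ^ (1/m)`, and
log-concavity gives `f ^ p ≤ f a ^ (p - 1) * f ((1 - p) • a + p • x)`, a rescaled translate of `f`,
so `f ^ p` is integrable for `0 < p ≤ 1`.
-/

open MeasureTheory

/-- A function is log-concave if `f((1-λ)x + λy) ≥ f(x)^(1-λ) f(y)^λ`. -/
def LogConcave {E : Type*} [AddCommGroup E] [Module ℝ E] (f : E → ℝ) : Prop :=
  ∀ x y : E, ∀ l : ℝ, 0 ≤ l → l ≤ 1 →
    f x ^ (1 - l) * f y ^ l ≤ f ((1 - l) • x + l • y)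

lemma LogConcave.rpow_le_mul_apply {E : Type*} [AddCommGroup E] [Module ℝ E] {f : E → ℝ}
    (hf : LogConcave f) {a : E} (ha : 0 < f a) {p : ℝ} (hp0 : 0 ≤ p) (hp1 : p ≤ 1) (x : E) :
    f x ^ p ≤ f a ^ (p - 1) * f ((1 - p) • a + p • x) := calc
  f x ^ p = f a ^ (p - 1) * (f a ^ (1 - p) * f x ^ p) := by
    rw [← mul_assoc, ← Real.rpow_add ha]; norm_num
  _ ≤ f a ^ (p - 1) * f ((1 - p) • a + p • x) :=
    mul_le_mul_of_nonneg_left (hf a x p hp0 hp1) (Real.rpow_nonneg ha.le _)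

lemma LogConcave.integrable_rpow {E : Type*} [NormedAddCommGroup E] [NormedSpace ℝ E]
    [MeasurableSpace E] [BorelSpace E] [FiniteDimensional ℝ E] {f : E → ℝ} {μ : Measure E}
    [μ.IsAddHaarMeasure] (hf : LogConcave f)
    (hf0 : ∀ x, 0 ≤ f x) (hfint : Integrable f μ) {p : ℝ} (hp0 : 0 < p) (hp1 : p ≤ 1) :
    Integrable (fun x => f x ^ p) μ := by
  by_cases hz : ∀ x, f x = 0
  · simp [hz, Real.zero_rpow hp0.ne']
  push Not at hz
  obtain ⟨a, ha⟩ := hz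
  have ha : 0 < f a := (hf0 a).lt_of_ne' ha
  have hdom : Integrable (fun x => f a ^ (p - 1) * f ((1 - p) • a + p • x)) μ := by
    simp_rw [add_comm ((1 - p) • a)]
    exact (((hfint.comp_add_right ((1 - p) • a)).comp_smul hp0.ne').const_mul _)
  refine hdom.mono' (hfint.aemeasurable.pow_const p).aestronglyMeasurable (.of_forall fun x => ?_)
  rw [Real.norm_of_nonneg (Real.rpow_nonneg (hf0 x) p)]
  exact hf.rpow_le_mul_apply ha hp0.le hp1 x

section FiniteFamily

variable {ι : Type*} [Fintype ι] [Nonempty ι]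

lemma iInf_le_prod_rpow_inv_card {a : ι → ℝ} (ha : ∀ j, 0 ≤ a j) :
    ⨅ j, a j ≤ ∏ j, a j ^ (Fintype.card ι : ℝ)⁻¹ := by
  have hinf : 0 ≤ ⨅ j, a j := le_ciInf ha
  have hcard : (Fintype.card ι : ℝ) ≠ 0 := Nat.cast_ne_zero.2 Fintype.card_ne_zero
  calc ⨅ j, a j = ∏ _j : ι, (⨅ j, a j) ^ (Fintype.card ι : ℝ)⁻¹ := by
        rw [Finset.prod_const, Finset.card_univ, ← Real.rpow_natCast, ← Real.rpow_mul hinf,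
          inv_mul_cancel₀ hcard, Real.rpow_one]
    _ ≤ ∏ j, a j ^ (Fintype.card ι : ℝ)⁻¹ :=
        Finset.prod_le_prod (fun _ _ => Real.rpow_nonneg hinf _)
          fun j _ => Real.rpow_le_rpow hinf (ciInf_le (Finite.bddBelow_range a) j) (by positivity)

lemma prod_le_iInf_of_le_one {a : ι → ℝ} (ha0 : ∀ j, 0 ≤ a j) (ha1 : ∀ j, a j ≤ 1) :
    ∏ j, a j ≤ ⨅ j, a j := by
  classical
  refine le_ciInf fun k => ?_
  calc ∏ j, a j = a k * ∏ j ∈ Finset.univ.erase k, a j :=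
        (Finset.mul_prod_erase _ _ (Finset.mem_univ k)).symm
    _ ≤ a k * 1 := mul_le_mul_of_nonneg_left
        (Finset.prod_le_one (fun j _ => ha0 j) fun j _ => ha1 j) (ha0 k)
    _ = a k := mul_one _

lemma integrable_iInf_apply {E : ι → Type*} [∀ j, MeasurableSpace (E j)]
    {μ : ∀ j, Measure (E j)} [∀ j, SigmaFinite (μ j)] {f : ∀ j, E j → ℝ}
    (hf0 : ∀ j x, 0 ≤ f j x) (hfm : ∀ j, AEMeasurable (f j) (μ j))
    (hfp : ∀ j, Integrable (fun x => f j x ^ (Fintype.card ι : ℝ)⁻¹) (μ j)) :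
    Integrable (fun x : ∀ j, E j => ⨅ j, f j (x j)) (Measure.pi μ) := by
  have hmeas : AEMeasurable (fun x : ∀ j, E j => ⨅ j, f j (x j)) (Measure.pi μ) :=
    AEMeasurable.iInf fun j =>
      (hfm j).comp_quasiMeasurePreserving (Measure.quasiMeasurePreserving_eval μ j)
  refine (Integrable.fintype_prod_dep hfp).mono' hmeas.aestronglyMeasurable
    (.of_forall fun x => ?_)
  rw [Real.norm_of_nonneg (le_ciInf fun j => hf0 j (x j))]
  exact iInf_le_prod_rpow_inv_card fun j => hf0 j (x j)

end FiniteFamily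

/-- for integrable log-concave `f_j : ℝ^{i_j} → [0,1]`,
`∫ min_j f_j(x_j) d(x_1,…,x_m) ≥ ∏_j ∫ f_j`. -/
theorem stmt_2 (m : ℕ) (hm : 0 < m) (i : Fin m → ℕ)
    (f : ∀ j : Fin m, (Fin (i j) → ℝ) → ℝ)
    (hf0 : ∀ j x, 0 ≤ f j x) (hf1 : ∀ j x, f j x ≤ 1)
    (hflc : ∀ j, LogConcave (f j)) (hfint : ∀ j, Integrable (f j)) :
    ∏ j, ∫ xj : Fin (i j) → ℝ, f j xj ≤
      ∫ x : ∀ j : Fin m, Fin (i j) → ℝ, ⨅ j : Fin m, f j (x j) := by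
  have : Nonempty (Fin m) := ⟨⟨0, hm⟩⟩
  have hp1 : (Fintype.card (Fin m) : ℝ)⁻¹ ≤ 1 :=
    inv_le_one_of_one_le₀ (Nat.one_le_cast.2 Fintype.card_pos)
  have hmin : Integrable (fun x : ∀ j, Fin (i j) → ℝ => ⨅ j, f j (x j)) :=
    integrable_iInf_apply hf0 (fun j => (hfint j).aemeasurable) fun j =>
      (hflc j).integrable_rpow (hf0 j) (hfint j) (by positivity) hp1
  rw [← integral_fintype_prod_volume_eq_prod]
  exact integral_mono_of_nonneg (.of_forall fun x => Finset.prod_nonneg fun j _ => hf0 j (x j))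
    hmin (.of_forall fun x => prod_le_iInf_of_le_one (fun j => hf0 j (x j)) fun j => hf1 j (x j))
end

section
/- For all integers $n,p$ with $2\leq p\leq n/4$, we have $\frac{p!/n^p}{(p-1)!^{p-1}/(n(p-1))!} \geq n^{\frac{n(p-2)}{4}}\,(p-1)^{\frac{(n-4p)(p-1)}{2}}\,(p-1)^{(p-1)(p+2)}$. -/
lemma pow_self_le_factorial_sq (k : ℕ) : k ^ k ≤ (Nat.factorial k) ^ 2 := by
  rw [sq, ← Finset.prod_range_add_one_eq_factorial]
  nth_rewrite 2 [← Finset.prod_range_reflect (fun x => x + 1) k]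
  rw [← Finset.prod_mul_distrib]
  calc k ^ k = ∏ _x ∈ Finset.range k, k := by rw [Finset.prod_const, Finset.card_range]
    _ ≤ _ := by
      apply Finset.prod_le_prod'
      intro i hi
      simp only [Finset.mem_range] at hi
      obtain ⟨m, hm⟩ := Nat.exists_eq_add_of_le (Nat.succ_le_of_lt hi)
      have h2 : k - 1 - i + 1 = m + 1 := by omega
      rw [h2, hm]
      nlinarith

lemma rpow_combine (N q a a' b b' : ℝ) (hN : 0 < N) (hq : 0 < q)
    (hb : b = b' + q) (hqN : q ^ q ≤ N ^ (a' - a)) :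
    N ^ a * q ^ b ≤ N ^ a' * q ^ b' := by
  rw [hb, Real.rpow_add hq]
  calc N ^ a * (q ^ b' * q ^ q) ≤ N ^ a * (q ^ b' * N ^ (a' - a)) := by
        exact mul_le_mul_of_nonneg_left
          (mul_le_mul_of_nonneg_left hqN (Real.rpow_pos_of_pos hq b').le)
          (Real.rpow_pos_of_pos hN a).le
    _ = N ^ a' * q ^ b' := by
        rw [show N ^ a * (q ^ b' * N ^ (a' - a)) = N ^ a * N ^ (a' - a) * q ^ b' by ring,
          ← Real.rpow_add hN]
        ring_nf


/-- quantitative comparison of the constants `p!/n^p` and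
`(p-1)!^{p-1}/(n(p-1))!` for `2 ≤ p ≤ n/4`. -/
theorem stmt_13 (n p : ℕ) (hp : 2 ≤ p) (hn : 4 * p ≤ n) :
    (n : ℝ) ^ (((n : ℝ) * ((p : ℝ) - 2)) / 4) *
        ((p : ℝ) - 1) ^ ((((n : ℝ) - 4 * (p : ℝ)) * ((p : ℝ) - 1)) / 2) *
        ((p : ℝ) - 1) ^ ((p - 1) * (p + 2)) ≤
      ((Nat.factorial p : ℝ) / (n : ℝ) ^ p) /
        ((Nat.factorial (p - 1) : ℝ) ^ (p - 1) / (Nat.factorial (n * (p - 1)) : ℝ)) := by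
  set N : ℝ := (n : ℝ) with hNdef
  set q : ℝ := (p : ℝ) - 1 with hqdef
  have hp1 : 1 ≤ p := by omega
  have hpR : (2:ℝ) ≤ (p:ℝ) := by exact_mod_cast hp
  have hq1 : (1:ℝ) ≤ q := by simp [hqdef]; linarith
  have hq0 : (0:ℝ) < q := by linarith
  have hn8 : 8 ≤ n := by omega
  have hN8 : (8:ℝ) ≤ N := by rw [hNdef]; exact_mod_cast hn8
  have hN0 : (0:ℝ) < N := by linarith
  have hN1 : (1:ℝ) ≤ N := by linarith
  have hnN : 4 * (p:ℝ) ≤ N := by rw [hNdef]; exact_mod_cast hn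
  have hcast : ((p - 1 : ℕ) : ℝ) = q := by
    simp [hqdef]; push_cast [Nat.cast_sub hp1]; ring
  set k : ℕ := n * (p - 1) with hkdef
  have hkcast : ((k : ℕ) : ℝ) = N * q := by
    push_cast [hkdef, Nat.cast_sub hp1]; ring
  have hk0 : (0:ℝ) < (k:ℝ) := by rw [hkcast]; positivity
  -- Step 1: k^(k/2) ≤ k!
  have hfac : ((k:ℝ)) ^ ((k:ℝ)/2) ≤ (Nat.factorial k : ℝ) := by
    have hsq : ((k:ℝ)) ^ ((k:ℝ)/2) * ((k:ℝ)) ^ ((k:ℝ)/2)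
        ≤ (Nat.factorial k : ℝ) * (Nat.factorial k : ℝ) := by
      rw [← Real.rpow_add hk0]
      have : (k:ℝ)/2 + (k:ℝ)/2 = ((k:ℕ):ℝ) := by ring
      rw [this, Real.rpow_natCast, ← sq]
      exact_mod_cast pow_self_le_factorial_sq k
    have h1 : (0:ℝ) ≤ ((k:ℝ)) ^ ((k:ℝ)/2) := (Real.rpow_pos_of_pos hk0 _).le
    have h2 : (0:ℝ) ≤ (Nat.factorial k : ℝ) := by positivity
    exact (mul_self_le_mul_self_iff h1 h2).mpr hsq
  -- Step 2: (p-1)!^(p-1) ≤ q^((p-1)*(p-1))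
  have hfle : ((Nat.factorial (p-1) : ℝ)) ^ (p - 1) ≤ q ^ ((p-1)*(p-1)) := by
    have := Nat.factorial_le_pow (p - 1)
    have h : ((Nat.factorial (p-1) : ℝ)) ≤ ((p-1:ℕ):ℝ) ^ (p-1) := by exact_mod_cast this
    calc ((Nat.factorial (p-1) : ℝ)) ^ (p - 1) ≤ (((p-1:ℕ):ℝ) ^ (p-1)) ^ (p-1) := by
          apply pow_le_pow_left₀ (by positivity) h
      _ = q ^ ((p-1)*(p-1)) := by rw [hcast, ← pow_mul]
  -- main exponent inequality
  have keyexp : q ^ q ≤ N ^ ((N * q / 2) - (N * ((p:ℝ) - 2) / 4 + (p:ℝ))) := by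
    calc q ^ q ≤ N ^ q := Real.rpow_le_rpow hq0.le (by linarith) hq0.le
      _ ≤ _ := by
        apply Real.rpow_le_rpow_of_exponent_le hN1
        have : N * (p:ℝ) / 4 ≥ (p:ℝ) * (p:ℝ) := by nlinarith
        simp only [hqdef]; nlinarith
  have main : N ^ ((N * ((p:ℝ) - 2)) / 4) * q ^ (((N - 4 * (p:ℝ)) * q) / 2) *
      q ^ (((p:ℝ)-1) * ((p:ℝ)+2)) * (N ^ ((p:ℝ)) * q ^ (q*q)) ≤
      N ^ (N*q/2) * q ^ (N*q/2) := by
    have e1 : N ^ ((N * ((p:ℝ) - 2)) / 4) * q ^ (((N - 4 * (p:ℝ)) * q) / 2) *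
        q ^ (((p:ℝ)-1) * ((p:ℝ)+2)) * (N ^ ((p:ℝ)) * q ^ (q*q)) =
        N ^ ((N * ((p:ℝ) - 2)) / 4 + (p:ℝ)) *
        q ^ ((((N - 4 * (p:ℝ)) * q) / 2 + ((p:ℝ)-1) * ((p:ℝ)+2)) + q*q) := by
      rw [Real.rpow_add hN0, Real.rpow_add hq0, Real.rpow_add hq0]; ring
    rw [e1]
    apply rpow_combine _ _ _ _ _ _ hN0 hq0 _ keyexp
    simp only [hqdef]
    try ring
  -- assemble
  have hF0 : (0:ℝ) < ((Nat.factorial (p-1) : ℝ)) ^ (p - 1) := by positivity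
  have hNp0 : (0:ℝ) < N ^ p := by positivity
  have hk!0 : (0:ℝ) < (Nat.factorial k : ℝ) := by positivity
  have hrhs : ((Nat.factorial p : ℝ) / N ^ p) /
      ((Nat.factorial (p - 1) : ℝ) ^ (p - 1) / (Nat.factorial k : ℝ)) =
      ((Nat.factorial p : ℝ) * (Nat.factorial k : ℝ)) /
      (N ^ p * ((Nat.factorial (p-1) : ℝ)) ^ (p - 1)) := by
    field_simp
    try ring
  rw [hrhs]
  have step : ((k:ℝ)) ^ ((k:ℝ)/2) / (N ^ p * q ^ ((p-1)*(p-1))) ≤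
      ((Nat.factorial p : ℝ) * (Nat.factorial k : ℝ)) /
      (N ^ p * ((Nat.factorial (p-1) : ℝ)) ^ (p - 1)) := by
    apply div_le_div₀ (by positivity)
    · calc ((k:ℝ)) ^ ((k:ℝ)/2) ≤ (Nat.factorial k : ℝ) := hfac
        _ ≤ (Nat.factorial p : ℝ) * (Nat.factorial k : ℝ) := by
          have h1p : (1:ℝ) ≤ (Nat.factorial p : ℝ) := by
            exact_mod_cast Nat.one_le_iff_ne_zero.mpr (Nat.factorial_ne_zero p)
          nlinarith
    · positivity
    · exact mul_le_mul_of_nonneg_left hfle hNp0.le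
  refine le_trans ?_ step
  rw [le_div_iff₀ (by positivity)]
  have eq2 : ((k:ℝ)) ^ ((k:ℝ)/2) = N ^ (N*q/2) * q ^ (N*q/2) := by
    rw [hkcast, Real.mul_rpow hN0.le hq0.le]
  have eq3 : (N:ℝ) ^ p = N ^ ((p:ℝ)) := by rw [Real.rpow_natCast]
  have eq4 : q ^ ((p-1)*(p-1)) = q ^ (q*q) := by
    rw [← Real.rpow_natCast q ((p-1)*(p-1))]
    congr 1
    push_cast [Nat.cast_sub hp1]
    simp [hqdef]
  have eq5 : q ^ ((p - 1) * (p + 2)) = q ^ (((p:ℝ)-1) * ((p:ℝ)+2)) := by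
    rw [← Real.rpow_natCast q ((p-1)*(p+2))]
    congr 1
    push_cast [Nat.cast_sub hp1]
    ring
  rw [eq2, eq3, eq4, eq5]
  exact main
end

section
/- For every integer $n\geq 5$, $\frac{(n-1)!/n^{n-1}}{(n-2)!^{n-2}/(n(n-2))!} \geq 2^{n-5}(n-2)^{n-4}\big(n(n-2)\big)^{\frac{n(n-2)}{16}}$. -/
/-!
Take logarithms. With `m = n - 2` and `N = n m`, Stirling-type bounds in their crudest form,
`log N! ≥ N log N - N` (from `N ^ N / N! ≤ exp N`) and `log m! ≤ m log m`, together with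
`log (n - 1)! ≥ 0`, reduce the claim to an inequality that is linear in `log 2 ≤ log m ≤ log n`
with polynomial coefficients in `n`. The main term `N log N - m log m! ≥ 2m log m + N log n`
dominates the rest; the loss `-N` from Stirling is absorbed by `N ≤ (5/8) N log n`, which
holds because `e ^ 8 < 5 ^ 5`.
-/

open Real
open scoped Nat

lemma eight_fifths_lt_log_five : (8 : ℝ) / 5 < log 5 := by
  rw [div_lt_iff₀ (by norm_num), mul_comm, ← log_rpow (by norm_num),
    lt_log_iff_exp_lt (by positivity)]
  calc exp 8 = exp 1 ^ 8 := by rw [exp_one_pow]; norm_num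
    _ < 2.7182818286 ^ 8 := by gcongr; exact exp_one_lt_d9
    _ < (5 : ℝ) ^ (5 : ℝ) := by norm_num

lemma mul_log_sub_le_log_factorial (k : ℕ) : k * log k - k ≤ log (k ! : ℝ) := by
  rcases k.eq_zero_or_pos with rfl | hk
  · simp
  have hk! : (0 : ℝ) < k ! := mod_cast k.factorial_pos
  have h := pow_div_factorial_le_exp (k : ℝ) k.cast_nonneg k
  rw [div_le_iff₀ hk!, ← log_le_log_iff (by positivity) (by positivity), log_pow,
    log_mul (exp_pos _).ne' hk!.ne', log_exp] at h
  linarith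

lemma log_factorial_le_mul_log (k : ℕ) : log (k ! : ℝ) ≤ k * log k := by
  rw [← log_pow]
  exact log_le_log (mod_cast k.factorial_pos) (mod_cast k.factorial_le_pow)

lemma log_factorial_mul_lower_bound (k : ℕ) :
    k * log 2 + (k + 1) * log (k + 3) + (k + 4) * log (k + 5)
        + (k + 3) * log ((k + 3)! : ℝ) + (k + 5) * (k + 3) / 16 * (log (k + 5) + log (k + 3))
      ≤ log (((k + 5) * (k + 3))! : ℝ) := by
  have hm! := log_factorial_le_mul_log (k + 3)
  have hN! := mul_log_sub_le_log_factorial ((k + 5) * (k + 3))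
  push_cast at hm! hN!
  rw [log_mul (by positivity) (by positivity)] at hN!
  have hk : (0 : ℝ) ≤ k := k.cast_nonneg
  have h2m : log 2 ≤ log (k + 3) := log_le_log (by norm_num) (by linarith)
  have hmn : log (k + 3) ≤ log (k + 5) := log_le_log (by positivity) (by linarith)
  have hn : 8 / 5 ≤ log (k + 5) :=
    eight_fifths_lt_log_five.le.trans (log_le_log (by norm_num) (by linarith))
  -- with `m = k + 3`, `n = k + 5`, `N = n m`, the slack is
  -- `(N/4 + 4 - m) log m + (5N/16 - m - 1) (log n - log m)`
  nlinarith [mul_le_mul_of_nonneg_left hm! (by positivity : (0 : ℝ) ≤ k + 3),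
    mul_nonneg hk (sub_nonneg.2 h2m),
    mul_nonneg (by positivity : (0 : ℝ) ≤ (k + 5) * (k + 3)) (sub_nonneg.2 hn),
    mul_nonneg (by positivity : (0 : ℝ) ≤ k ^ 2 + 4 * k + 19)
      ((log_nonneg (by norm_num : (1 : ℝ) ≤ 2)).trans h2m),
    mul_nonneg (by positivity : (0 : ℝ) ≤ 5 * k ^ 2 + 24 * k + 11) (sub_nonneg.2 hmn)]

/-- quantitative comparison of the constants `(n-1)!/n^{n-1}` and
`(n-2)!^{n-2}/(n(n-2))!` for `n ≥ 5`. -/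
theorem stmt_14 (n : ℕ) (hn : 5 ≤ n) :
    (2 : ℝ) ^ (n - 5) * ((n : ℝ) - 2) ^ (n - 4) *
        ((n : ℝ) * ((n : ℝ) - 2)) ^ (((n : ℝ) * ((n : ℝ) - 2)) / 16) ≤
      ((Nat.factorial (n - 1) : ℝ) / (n : ℝ) ^ (n - 1)) /
        ((Nat.factorial (n - 2) : ℝ) ^ (n - 2) / (Nat.factorial (n * (n - 2)) : ℝ)) := by
  obtain ⟨k, rfl⟩ : ∃ k, n = k + 5 := ⟨n - 5, by omega⟩
  simp only [Nat.add_sub_cancel, show k + 5 - 4 = k + 1 by omega,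
    show k + 5 - 1 = k + 4 by omega, show k + 5 - 2 = k + 3 by omega]
  push_cast
  rw [show (k : ℝ) + 5 - 2 = k + 3 by ring, ← log_le_log_iff (by positivity) (by positivity),
    log_div (by positivity) (by positivity), log_div (by positivity) (by positivity),
    log_div (by positivity) (by positivity), log_mul (by positivity) (by positivity),
    log_mul (by positivity) (by positivity), log_pow, log_pow, log_pow, log_pow,
    log_rpow (by positivity), log_mul (by positivity) (by positivity)]
  have h_main := log_factorial_mul_lower_bound k
  have h_fact : 0 ≤ log ((k + 4)! : ℝ) := log_nonneg (mod_cast (k + 4).factorial_pos)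
  push_cast at h_main ⊢
  linarith
end
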